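/- arXiv:2009.12055 — 2 statements merged into one kernel-verified Lean document; each statement's English description precedes it below -/
import Mathlib

section
/- If $N$ is a CR-statistical submanifold of a holomorphic statistical manifold $\overline{N}$, then the holomorphic distribution $\mathcal{D}$ is minimal with respect to both induced dual connections $\nabla$ and $\nabla^*$; that is, for any local orthonormal frame of $\mathcal{D}$ of the form $\{e_1, \dots, e_k, \mathcal{J}e_1, \dots, \mathcal{J}e_k\}$, $\sum_i (\nabla_{e_i} e_i + \nabla_{\mathcal{J}e_i} \mathcal{J}e_i)$ and $\sum_i (\nabla^*_{e_i} e_i + \nabla^*_{\mathcal{J}e_i} \mathcal{J}e_i)$ both lie in $\mathcal{D}$. Equivalently, $g(Z, \nabla^*_X X + \nabla^*_{\mathcal{J}X}\mathcal{J}X) = 0$ for any $X \in \mathcal{D}$ and $Z \in \mathcal{D}^{\perp}$. -/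
open scoped BigOperators

/- Abstract algebraic model of the geometry of a statistical manifold:
`A` plays the role of the ring of smooth functions on the manifold `N̄`,
`V` plays the role of the module of vector fields `Γ(TN̄)`.  -/

variable (A : Type) [CommRing A] [Algebra ℝ A]
variable (V : Type) [AddCommGroup V] [Module A V] [Module ℝ V] [IsScalarTower ℝ A V]

/-- The basic context: a (pseudo-Riemannian) metric `g`, the action `D` of vector
fields on functions as derivations, and the Lie bracket of vector fields. -/
structure StatContext where
  g : V →ₗ[A] V →ₗ[A] A
  g_symm : ∀ X Y : V, g X Y = g Y X
  g_nondeg : ∀ X : V, (∀ Y : V, g X Y = 0) → X = 0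
  D : V → Derivation ℝ A A
  bracket : V → V → V

variable {A V}

/-- An affine connection. -/
structure AffConn (ctx : StatContext A V) where
  op : V → V → V
  add_left : ∀ X Y Z : V, op (X + Y) Z = op X Z + op Y Z
  smul_left : ∀ (f : A) (X Y : V), op (f • X) Y = f • op X Y
  add_right : ∀ X Y Z : V, op X (Y + Z) = op X Y + op X Z
  leibniz : ∀ (X : V) (f : A) (Y : V), op X (f • Y) = ctx.D X f • Y + f • op X Y

/-- Torsion-freeness of a connection. -/
def IsTorsionFree (ctx : StatContext A V) (C : AffConn ctx) : Prop :=
  ∀ X Y : V, C.op X Y - C.op Y X = ctx.bracket X Y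

/-- `(∇_X g)(Y, Z)`. -/
def nablaG (ctx : StatContext A V) (C : AffConn ctx) (X Y Z : V) : A :=
  ctx.D X (ctx.g Y Z) - ctx.g (C.op X Y) Z - ctx.g Y (C.op X Z)

/-- `(∇, g)` is a statistical structure: `∇` is torsion-free and `∇g` is symmetric. -/
def IsStatistical (ctx : StatContext A V) (C : AffConn ctx) : Prop :=
  IsTorsionFree ctx C ∧ ∀ X Y Z : V, nablaG ctx C X Y Z = nablaG ctx C Y X Z

/-- `∇*` is the dual connection of `∇` with respect to `g`:
`X g(Y,Z) = g(∇_X Y, Z) + g(Y, ∇*_X Z)`. -/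
def IsDual (ctx : StatContext A V) (C Cs : AffConn ctx) : Prop :=
  ∀ X Y Z : V, ctx.D X (ctx.g Y Z) = ctx.g (C.op X Y) Z + ctx.g Y (Cs.op X Z)
/-- A holomorphic statistical manifold: a Kaehler manifold `(N̄, g, J)` (with
Levi-Civita connection `LC`) together with a statistical structure `(∇, g)` with
dual connection `∇*` such that the Kaehler form `ω(X,Y) = g(X, JY)` is `∇`-parallel. -/
structure HolStatMan (ctx : StatContext A V) where
  C : AffConn ctx
  Cs : AffConn ctx
  J : V →ₗ[A] V
  statC : IsStatistical ctx C
  dual : IsDual ctx C Cs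
  Jsq : ∀ X : V, J (J X) = -X
  Jiso : ∀ X Y : V, ctx.g (J X) (J Y) = ctx.g X Y
  LC : AffConn ctx
  LC_tf : IsTorsionFree ctx LC
  LC_metric : ∀ X Y Z : V, ctx.D X (ctx.g Y Z) = ctx.g (LC.op X Y) Z + ctx.g Y (LC.op X Z)
  LC_J : ∀ X Y : V, LC.op X (J Y) = J (LC.op X Y)
  omega_par : ∀ X Y Z : V,
    ctx.D X (ctx.g Y (J Z)) = ctx.g (C.op X Y) (J Z) + ctx.g Y (J (C.op X Z))

/-- A statistical submanifold `N` of a holomorphic statistical manifold, encoded by the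
submodule `T` of tangent vector fields, the submodule `Nor` of normal vector fields,
the induced dual connections `nab, nabS`, the imbedding curvature tensors (second
fundamental forms) `B, Bs`, the shape operators `Aop, AopS`, the normal connections
`perp, perpS` (Gauss and Weingarten formulas), and the decompositions
`J X = P X + F X` (tangent `X`) and `J U = t' U + f' U` (normal `U`). -/
structure StatSub (ctx : StatContext A V) (M : HolStatMan ctx) where
  T : Submodule A V
  Nor : Submodule A V
  compl : IsCompl T Nor
  orth : ∀ X ∈ T, ∀ U ∈ Nor, ctx.g X U = 0
  bracket_mem : ∀ X ∈ T, ∀ Y ∈ T, ctx.bracket X Y ∈ T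
  nab : V → V → V
  nabS : V → V → V
  B : V → V → V
  Bs : V → V → V
  Aop : V → V → V
  AopS : V → V → V
  perp : V → V → V
  perpS : V → V → V
  nab_mem : ∀ X ∈ T, ∀ Y ∈ T, nab X Y ∈ T
  nabS_mem : ∀ X ∈ T, ∀ Y ∈ T, nabS X Y ∈ T
  B_mem : ∀ X ∈ T, ∀ Y ∈ T, B X Y ∈ Nor
  Bs_mem : ∀ X ∈ T, ∀ Y ∈ T, Bs X Y ∈ Nor
  B_symm : ∀ X ∈ T, ∀ Y ∈ T, B X Y = B Y X
  Bs_symm : ∀ X ∈ T, ∀ Y ∈ T, Bs X Y = Bs Y X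
  A_mem : ∀ U ∈ Nor, ∀ X ∈ T, Aop U X ∈ T
  As_mem : ∀ U ∈ Nor, ∀ X ∈ T, AopS U X ∈ T
  perp_mem : ∀ X ∈ T, ∀ U ∈ Nor, perp X U ∈ Nor
  perpS_mem : ∀ X ∈ T, ∀ U ∈ Nor, perpS X U ∈ Nor
  gauss : ∀ X ∈ T, ∀ Y ∈ T, M.C.op X Y = nab X Y + B X Y
  gaussS : ∀ X ∈ T, ∀ Y ∈ T, M.Cs.op X Y = nabS X Y + Bs X Y
  wein : ∀ X ∈ T, ∀ U ∈ Nor, M.C.op X U = - Aop U X + perp X U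
  weinS : ∀ X ∈ T, ∀ U ∈ Nor, M.Cs.op X U = - AopS U X + perpS X U
  P : V → V
  F : V → V
  t' : V → V
  f' : V → V
  PF_dec : ∀ X ∈ T, M.J X = P X + F X
  P_mem : ∀ X ∈ T, P X ∈ T
  F_mem : ∀ X ∈ T, F X ∈ Nor
  tf_dec : ∀ U ∈ Nor, M.J U = t' U + f' U
  t_mem : ∀ U ∈ Nor, t' U ∈ T
  f_mem : ∀ U ∈ Nor, f' U ∈ Nor

/-- A CR-statistical submanifold: the tangent bundle splits orthogonally as
`𝒟 ⊕ 𝒟⊥` with `𝒟` holomorphic (`J𝒟 = 𝒟`) and `𝒟⊥` totally real (`J𝒟⊥ ⊆ T⊥N`). -/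
structure CRSub (ctx : StatContext A V) (M : HolStatMan ctx) (S : StatSub ctx M) where
  Dd : Submodule A V
  Dp : Submodule A V
  Dd_le : Dd ≤ S.T
  Dp_le : Dp ≤ S.T
  orthD : ∀ X ∈ Dd, ∀ Z ∈ Dp, ctx.g X Z = 0
  spanD : Dd ⊔ Dp = S.T
  J_Dd : ∀ X ∈ Dd, M.J X ∈ Dd
  J_Dp : ∀ Z ∈ Dp, M.J Z ∈ S.Nor

section AuxLemmas

variable {ctx : StatContext A V}

lemma AffConn.op_zero_right (C : AffConn ctx) (X : V) : C.op X 0 = 0 := by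
  have h := C.add_right X 0 0
  rw [add_zero] at h
  exact (left_eq_add.mp h)

lemma AffConn.op_neg_right (C : AffConn ctx) (X Y : V) : C.op X (-Y) = -(C.op X Y) := by
  have h := C.add_right X Y (-Y)
  rw [add_neg_cancel, C.op_zero_right] at h
  exact (neg_eq_of_add_eq_zero_right h.symm).symm

/-- Key ambient identity: `∇*_X (J Z) = J (∇_X Z)`. -/
lemma key1 (M : HolStatMan ctx) (X Z : V) :
    M.Cs.op X (M.J Z) = M.J (M.C.op X Z) := by
  have h2 : ∀ Y, ctx.g (M.Cs.op X (M.J Z) - M.J (M.C.op X Z)) Y = 0 := by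
    intro Y
    have hd := M.dual X Y (M.J Z)
    have ho := M.omega_par X Y Z
    have hy : ctx.g Y (M.Cs.op X (M.J Z)) - ctx.g Y (M.J (M.C.op X Z)) = 0 := by
      linear_combination ho - hd
    rw [ctx.g_symm, map_sub]
    exact hy
  have := ctx.g_nondeg _ h2
  exact sub_eq_zero.mp this

/-- Key ambient identity, dual form: `∇_X (J Z) = J (∇*_X Z)`. -/
lemma key2 (M : HolStatMan ctx) (X Z : V) :
    M.C.op X (M.J Z) = M.J (M.Cs.op X Z) := by
  have h := key1 M X (M.J Z)
  rw [M.Jsq, M.Cs.op_neg_right] at h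
  have h2 := congrArg M.J h
  rw [map_neg, M.Jsq] at h2
  exact (neg_inj.mp h2).symm

variable {M : HolStatMan ctx}

/-- `g(A*_ξ X, Y) = g(B(X,Y), ξ)`. -/
lemma shapeS (S : StatSub ctx M) {X Y ξ : V} (hX : X ∈ S.T) (hY : Y ∈ S.T)
    (hξ : ξ ∈ S.Nor) : ctx.g (S.AopS ξ X) Y = ctx.g (S.B X Y) ξ := by
  have hd := M.dual X Y ξ
  rw [S.orth Y hY ξ hξ, map_zero, S.gauss X hX Y hY, S.weinS X hX ξ hξ] at hd
  have h1 : ctx.g (S.nab X Y) ξ = 0 := S.orth _ (S.nab_mem X hX Y hY) ξ hξ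
  have h2 : ctx.g Y (S.perpS X ξ) = 0 := S.orth Y hY _ (S.perpS_mem X hX ξ hξ)
  have hsym : ctx.g Y (S.AopS ξ X) = ctx.g (S.AopS ξ X) Y := ctx.g_symm _ _
  simp only [map_add, LinearMap.add_apply, map_neg, LinearMap.neg_apply] at hd
  linear_combination hd + h1 - hsym + h2

/-- `g(A_ξ X, Y) = g(B*(X,Y), ξ)`. -/
lemma shapeC (S : StatSub ctx M) {X Y ξ : V} (hX : X ∈ S.T) (hY : Y ∈ S.T)
    (hξ : ξ ∈ S.Nor) : ctx.g (S.Aop ξ X) Y = ctx.g (S.Bs X Y) ξ := by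
  have hd := M.dual X ξ Y
  rw [ctx.g_symm ξ Y, S.orth Y hY ξ hξ, map_zero, S.gaussS X hX Y hY,
    S.wein X hX ξ hξ] at hd
  have h1 : ctx.g ξ (S.nabS X Y) = 0 := by
    rw [ctx.g_symm]; exact S.orth _ (S.nabS_mem X hX Y hY) ξ hξ
  have h2 : ctx.g (S.perp X ξ) Y = 0 := by
    rw [ctx.g_symm]; exact S.orth Y hY _ (S.perp_mem X hX ξ hξ)
  have h3 : ctx.g ξ (S.Bs X Y) = ctx.g (S.Bs X Y) ξ := ctx.g_symm _ _
  simp only [map_add, LinearMap.add_apply, map_neg, LinearMap.neg_apply] at hd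
  linear_combination hd + h1 + h2 + h3

variable {S : StatSub ctx M}

/-- The key scalar computation for `∇*`. -/
lemma scalarS (cr : CRSub ctx M S) {X Z : V} (hX : X ∈ cr.Dd) (hZ : Z ∈ cr.Dp) :
    ctx.g Z (S.nabS X X + S.nabS (M.J X) (M.J X)) = 0 := by
  have hXT : X ∈ S.T := cr.Dd_le hX
  have hJX : M.J X ∈ cr.Dd := cr.J_Dd X hX
  have hJXT : M.J X ∈ S.T := cr.Dd_le hJX
  have hZT : Z ∈ S.T := cr.Dp_le hZ
  have hJZ : M.J Z ∈ S.Nor := cr.J_Dp Z hZ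
  -- first term
  have e1 : ctx.g Z (S.nabS X X) = ctx.g Z (M.Cs.op X X) - ctx.g Z (S.Bs X X) := by
    rw [S.gaussS X hXT X hXT, map_add]; ring
  have e1' : ctx.g Z (S.Bs X X) = 0 := S.orth Z hZT _ (S.Bs_mem X hXT X hXT)
  have e2 : ctx.g Z (M.Cs.op X X) = - ctx.g (M.C.op X Z) X := by
    have hd := M.dual X Z X
    have hz : ctx.g Z X = 0 := by rw [ctx.g_symm]; exact cr.orthD X hX Z hZ
    rw [hz, map_zero] at hd
    linear_combination -hd
  have e3 : ctx.g (M.C.op X Z) X = - ctx.g (S.AopS (M.J Z) X) (M.J X) := by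
    have hiso : ctx.g (M.C.op X Z) X = ctx.g (M.J (M.C.op X Z)) (M.J X) :=
      (M.Jiso _ _).symm
    rw [hiso, ← key1 M X Z, S.weinS X hXT _ hJZ]
    have hp : ctx.g (S.perpS X (M.J Z)) (M.J X) = 0 := by
      rw [ctx.g_symm]; exact S.orth _ hJXT _ (S.perpS_mem X hXT _ hJZ)
    simp only [map_add, LinearMap.add_apply, map_neg, LinearMap.neg_apply]
    rw [hp]; ring
  -- second term
  have f1 : ctx.g Z (S.nabS (M.J X) (M.J X)) =
      ctx.g Z (M.Cs.op (M.J X) (M.J X)) - ctx.g Z (S.Bs (M.J X) (M.J X)) := by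
    rw [S.gaussS _ hJXT _ hJXT, map_add]; ring
  have f1' : ctx.g Z (S.Bs (M.J X) (M.J X)) = 0 :=
    S.orth Z hZT _ (S.Bs_mem _ hJXT _ hJXT)
  have f2 : ctx.g Z (M.Cs.op (M.J X) (M.J X)) = - ctx.g (M.C.op (M.J X) Z) (M.J X) := by
    have hd := M.dual (M.J X) Z (M.J X)
    have hz : ctx.g Z (M.J X) = 0 := by rw [ctx.g_symm]; exact cr.orthD _ hJX Z hZ
    rw [hz, map_zero] at hd
    linear_combination -hd
  have f3 : ctx.g (M.C.op (M.J X) Z) (M.J X) = ctx.g (S.AopS (M.J Z) (M.J X)) X := by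
    have hiso : ctx.g (M.C.op (M.J X) Z) (M.J X) =
        ctx.g (M.J (M.C.op (M.J X) Z)) (M.J (M.J X)) := (M.Jiso _ _).symm
    rw [hiso, ← key1 M (M.J X) Z, M.Jsq, S.weinS _ hJXT _ hJZ]
    have hp : ctx.g (S.perpS (M.J X) (M.J Z)) X = 0 := by
      rw [ctx.g_symm]; exact S.orth _ hXT _ (S.perpS_mem _ hJXT _ hJZ)
    simp only [map_add, LinearMap.add_apply, map_neg, LinearMap.neg_apply]
    rw [hp]; ring
  -- combine via the shape operator identity and symmetry of B
  have s1 : ctx.g (S.AopS (M.J Z) X) (M.J X) = ctx.g (S.B X (M.J X)) (M.J Z) :=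
    shapeS S hXT hJXT hJZ
  have s2 : ctx.g (S.AopS (M.J Z) (M.J X)) X = ctx.g (S.B (M.J X) X) (M.J Z) :=
    shapeS S hJXT hXT hJZ
  have sB : S.B X (M.J X) = S.B (M.J X) X := S.B_symm X hXT _ hJXT
  rw [map_add]
  rw [sB] at s1
  linear_combination e1 + f1 - e1' - f1' + e2 + f2 - e3 - f3 + s1 - s2

/-- The key scalar computation for `∇`. -/
lemma scalarC (cr : CRSub ctx M S) {X Z : V} (hX : X ∈ cr.Dd) (hZ : Z ∈ cr.Dp) :
    ctx.g Z (S.nab X X + S.nab (M.J X) (M.J X)) = 0 := by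
  have hXT : X ∈ S.T := cr.Dd_le hX
  have hJX : M.J X ∈ cr.Dd := cr.J_Dd X hX
  have hJXT : M.J X ∈ S.T := cr.Dd_le hJX
  have hZT : Z ∈ S.T := cr.Dp_le hZ
  have hJZ : M.J Z ∈ S.Nor := cr.J_Dp Z hZ
  have e1 : ctx.g Z (S.nab X X) = ctx.g Z (M.C.op X X) - ctx.g Z (S.B X X) := by
    rw [S.gauss X hXT X hXT, map_add]; ring
  have e1' : ctx.g Z (S.B X X) = 0 := S.orth Z hZT _ (S.B_mem X hXT X hXT)
  have e2 : ctx.g Z (M.C.op X X) = - ctx.g (M.Cs.op X Z) X := by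
    have hd := M.dual X X Z
    have hz : ctx.g X Z = 0 := cr.orthD X hX Z hZ
    rw [hz, map_zero] at hd
    have hsym1 : ctx.g (M.C.op X X) Z = ctx.g Z (M.C.op X X) := ctx.g_symm _ _
    have hsym2 : ctx.g X (M.Cs.op X Z) = ctx.g (M.Cs.op X Z) X := ctx.g_symm _ _
    linear_combination -hd - hsym1 - hsym2
  have e3 : ctx.g (M.Cs.op X Z) X = - ctx.g (S.Aop (M.J Z) X) (M.J X) := by
    have hiso : ctx.g (M.Cs.op X Z) X = ctx.g (M.J (M.Cs.op X Z)) (M.J X) :=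
      (M.Jiso _ _).symm
    rw [hiso, ← key2 M X Z, S.wein X hXT _ hJZ]
    have hp : ctx.g (S.perp X (M.J Z)) (M.J X) = 0 := by
      rw [ctx.g_symm]; exact S.orth _ hJXT _ (S.perp_mem X hXT _ hJZ)
    simp only [map_add, LinearMap.add_apply, map_neg, LinearMap.neg_apply]
    rw [hp]; ring
  have f1 : ctx.g Z (S.nab (M.J X) (M.J X)) =
      ctx.g Z (M.C.op (M.J X) (M.J X)) - ctx.g Z (S.B (M.J X) (M.J X)) := by
    rw [S.gauss _ hJXT _ hJXT, map_add]; ring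
  have f1' : ctx.g Z (S.B (M.J X) (M.J X)) = 0 :=
    S.orth Z hZT _ (S.B_mem _ hJXT _ hJXT)
  have f2 : ctx.g Z (M.C.op (M.J X) (M.J X)) = - ctx.g (M.Cs.op (M.J X) Z) (M.J X) := by
    have hd := M.dual (M.J X) (M.J X) Z
    have hz : ctx.g (M.J X) Z = 0 := cr.orthD _ hJX Z hZ
    rw [hz, map_zero] at hd
    have hsym1 : ctx.g (M.C.op (M.J X) (M.J X)) Z =
        ctx.g Z (M.C.op (M.J X) (M.J X)) := ctx.g_symm _ _
    have hsym2 : ctx.g (M.J X) (M.Cs.op (M.J X) Z) =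
        ctx.g (M.Cs.op (M.J X) Z) (M.J X) := ctx.g_symm _ _
    linear_combination -hd - hsym1 - hsym2
  have f3 : ctx.g (M.Cs.op (M.J X) Z) (M.J X) = ctx.g (S.Aop (M.J Z) (M.J X)) X := by
    have hiso : ctx.g (M.Cs.op (M.J X) Z) (M.J X) =
        ctx.g (M.J (M.Cs.op (M.J X) Z)) (M.J (M.J X)) := (M.Jiso _ _).symm
    rw [hiso, ← key2 M (M.J X) Z, M.Jsq, S.wein _ hJXT _ hJZ]
    have hp : ctx.g (S.perp (M.J X) (M.J Z)) X = 0 := by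
      rw [ctx.g_symm]; exact S.orth _ hXT _ (S.perp_mem _ hJXT _ hJZ)
    simp only [map_add, LinearMap.add_apply, map_neg, LinearMap.neg_apply]
    rw [hp]; ring
  have s1 : ctx.g (S.Aop (M.J Z) X) (M.J X) = ctx.g (S.Bs X (M.J X)) (M.J Z) :=
    shapeC S hXT hJXT hJZ
  have s2 : ctx.g (S.Aop (M.J Z) (M.J X)) X = ctx.g (S.Bs (M.J X) X) (M.J Z) :=
    shapeC S hJXT hXT hJZ
  have sB : S.Bs X (M.J X) = S.Bs (M.J X) X := S.Bs_symm X hXT _ hJXT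
  rw [map_add]
  rw [sB] at s1
  linear_combination e1 + f1 - e1' - f1' + e2 + f2 - e3 - f3 + s1 - s2

/-- A tangent vector orthogonal to `𝒟⊥` lies in `𝒟`. -/
lemma mem_Dd_of_orth (cr : CRSub ctx M S) {W : V} (hW : W ∈ S.T)
    (h : ∀ Z ∈ cr.Dp, ctx.g Z W = 0) : W ∈ cr.Dd := by
  rw [← cr.spanD] at hW
  obtain ⟨W1, h1, W2, h2, rfl⟩ := Submodule.mem_sup.mp hW
  have hW2 : W2 = 0 := by
    apply ctx.g_nondeg
    intro Y
    have hYtop : Y ∈ S.T ⊔ S.Nor := by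
      rw [S.compl.sup_eq_top]; exact Submodule.mem_top
    obtain ⟨Yt, hYt, Yn, hYn, rfl⟩ := Submodule.mem_sup.mp hYtop
    have hYt' : Yt ∈ cr.Dd ⊔ cr.Dp := by rw [cr.spanD]; exact hYt
    obtain ⟨Yd, hYd, Yp, hYp, rfl⟩ := Submodule.mem_sup.mp hYt'
    have g1 : ctx.g W2 Yd = 0 := by
      rw [ctx.g_symm]; exact cr.orthD Yd hYd W2 h2
    have g2 : ctx.g W2 Yp = 0 := by
      have hp := h Yp hYp
      have hp1 : ctx.g Yp W1 = 0 := by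
        rw [ctx.g_symm]; exact cr.orthD W1 h1 Yp hYp
      rw [map_add, hp1, zero_add] at hp
      rw [ctx.g_symm]; exact hp
    have g3 : ctx.g W2 Yn = 0 := S.orth W2 (cr.Dp_le h2) Yn hYn
    rw [map_add, map_add, g1, g2, g3]; ring
  rw [hW2, add_zero]
  exact h1

end AuxLemmas

/-- On a CR-statistical submanifold, the holomorphic distribution `𝒟` is
minimal with respect to both induced dual connections: for any orthonormal frame of `𝒟`
of the form `{e₁, …, e_k, Je₁, …, Je_k}` the traces `∑ (∇_{eᵢ} eᵢ + ∇_{Jeᵢ} Jeᵢ)` and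
`∑ (∇*_{eᵢ} eᵢ + ∇*_{Jeᵢ} Jeᵢ)` lie in `𝒟`; equivalently
`g(Z, ∇*_X X + ∇*_{JX} JX) = 0` for `X ∈ 𝒟`, `Z ∈ 𝒟⊥`. -/
theorem CR_holomorphic_distribution_minimal
    (ctx : StatContext A V) (M : HolStatMan ctx) (S : StatSub ctx M) (cr : CRSub ctx M S) :
    (∀ (k : ℕ) (e : Fin k → V), (∀ i, e i ∈ cr.Dd) →
      (∀ i j, ctx.g (e i) (e j) = if i = j then (1 : A) else 0) →
      (∀ i j, ctx.g (e i) (M.J (e j)) = 0) →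
      Submodule.span A (Set.range e ∪ Set.range fun i => M.J (e i)) = cr.Dd →
      (∑ i, (S.nab (e i) (e i) + S.nab (M.J (e i)) (M.J (e i)))) ∈ cr.Dd ∧
      (∑ i, (S.nabS (e i) (e i) + S.nabS (M.J (e i)) (M.J (e i)))) ∈ cr.Dd) ∧
    (∀ X ∈ cr.Dd, ∀ Z ∈ cr.Dp,
      ctx.g Z (S.nabS X X + S.nabS (M.J X) (M.J X)) = 0) := by
  constructor
  · intro k e he _ _ _
    have hmemT : ∀ (nb : V → V → V), (∀ X ∈ S.T, ∀ Y ∈ S.T, nb X Y ∈ S.T) →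
        (∑ i, (nb (e i) (e i) + nb (M.J (e i)) (M.J (e i)))) ∈ S.T := by
      intro nb hnb
      apply Submodule.sum_mem
      intro i _
      have h1 : e i ∈ S.T := cr.Dd_le (he i)
      have h2 : M.J (e i) ∈ S.T := cr.Dd_le (cr.J_Dd _ (he i))
      exact Submodule.add_mem _ (hnb _ h1 _ h1) (hnb _ h2 _ h2)
    constructor
    · apply mem_Dd_of_orth cr (hmemT S.nab S.nab_mem)
      intro Z hZ
      rw [map_sum]
      exact Finset.sum_eq_zero fun i _ => scalarC cr (he i) hZ
    · apply mem_Dd_of_orth cr (hmemT S.nabS S.nabS_mem)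
      intro Z hZ
      rw [map_sum]
      exact Finset.sum_eq_zero fun i _ => scalarS cr (he i) hZ
  · intro X hX Z hZ
    exact scalarS cr hX hZ
end

section
/- A CR-statistical submanifold $N$ of a holomorphic statistical manifold $\overline{N}$ is a CR-product (locally a Riemannian product of a holomorphic submanifold and a totally real submanifold) if $\mathcal{A}_{\mathcal{F}Z} X = 0$ and $\mathcal{A}^*_{\mathcal{F}Z} X = 0$ for all $X \in \mathcal{D}$ and $Z \in \mathcal{D}^{\perp}$. -/
open scoped BigOperators

/- Abstract algebraic model of the geometry of a statistical manifold:
`A` plays the role of the ring of smooth functions on the manifold `N̄`,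
`V` plays the role of the module of vector fields `Γ(TN̄)`.  -/

variable (A : Type) [CommRing A] [Algebra ℝ A]
variable (V : Type) [AddCommGroup V] [Module A V] [Module ℝ V] [IsScalarTower ℝ A V]

variable {A V}

/-- `N` is a CR-product: locally a Riemannian product of a holomorphic submanifold
(an integral manifold of `𝒟`) and a totally real submanifold (an integral manifold of
`𝒟⊥`).  By the de Rham-type decomposition this is encoded by both distributions being
parallel in `N` with respect to both induced dual connections (equivalently, all leaves
of `𝒟` and `𝒟⊥` are totally geodesic in `N` for `∇` and `∇*`). -/
def IsCRProduct (ctx : StatContext A V) (M : HolStatMan ctx)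
    (S : StatSub ctx M) (cr : CRSub ctx M S) : Prop :=
  (∀ X ∈ S.T, ∀ Y ∈ cr.Dd, S.nab X Y ∈ cr.Dd ∧ S.nabS X Y ∈ cr.Dd) ∧
  (∀ X ∈ S.T, ∀ Z ∈ cr.Dp, S.nab X Z ∈ cr.Dp ∧ S.nabS X Z ∈ cr.Dp)

/-! Since the Kähler form is `∇̄`-parallel, `∇̄*_X (J W) = J (∇̄_X W)`, and on `𝒟⊥` the
normal part `F` is all of `J`. For `X` tangent, `Z ∈ 𝒟⊥`, `Y ∈ 𝒟` this gives
`g(∇̄_X Z, Y) = g(∇̄*_X FZ, JY) = -g(A*_{FZ} X, JY) = -g(A*_{FZ} JY, X) = 0`,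
using that `A*` is self-adjoint and `JY ∈ 𝒟`; dually `g(∇̄*_X Z, Y) = 0` from `A_{FZ} 𝒟 = 0`.
So `∇̄_X` and `∇̄*_X` map `𝒟⊥` orthogonally to `𝒟`, hence by duality `𝒟` orthogonally to
`𝒟⊥`, and the Gauss formula transfers this to the induced connections `∇`, `∇*`. -/

section CRProduct

omit [Module ℝ V] [IsScalarTower ℝ A V]

variable {ctx : StatContext A V}

theorem AffConn.op_neg (C : AffConn ctx) (X Z : V) : C.op X (-Z) = -C.op X Z :=
  (AddMonoidHom.mk' (C.op X) (C.add_right X)).map_neg Z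

namespace HolStatMan

variable (M : HolStatMan ctx) {X Y Z : V}

theorem g_C_op_eq_neg (hYZ : ctx.g Y Z = 0) :
    ctx.g (M.C.op X Y) Z = -ctx.g (M.Cs.op X Z) Y := by
  have h := M.dual X Y Z
  rw [hYZ, map_zero, ctx.g_symm Y] at h
  linear_combination -h

theorem g_Cs_op_eq_neg (hYZ : ctx.g Y Z = 0) :
    ctx.g (M.Cs.op X Y) Z = -ctx.g (M.C.op X Z) Y := by
  rw [M.g_C_op_eq_neg (by rwa [ctx.g_symm]), neg_neg]

theorem Cs_op_J (X W : V) : M.Cs.op X (M.J W) = M.J (M.C.op X W) := by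
  refine sub_eq_zero.mp (ctx.g_nondeg _ fun Y => ?_)
  rw [ctx.g_symm, map_sub,
    add_left_cancel ((M.dual X Y (M.J W)).symm.trans (M.omega_par X Y W)), sub_self]

theorem C_op_J (X W : V) : M.C.op X (M.J W) = M.J (M.Cs.op X W) := by
  have h := congrArg M.J (M.Cs_op_J X (M.J W))
  rwa [M.Jsq, M.Jsq, M.Cs.op_neg, map_neg, neg_inj, eq_comm] at h

end HolStatMan

namespace StatSub

variable {M : HolStatMan ctx} (S : StatSub ctx M) {X Y U W : V}

theorem orth' (hU : U ∈ S.Nor) (hX : X ∈ S.T) : ctx.g U X = 0 := by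
  rw [ctx.g_symm]; exact S.orth X hX U hU

theorem eq_zero_of_forall_g_eq_zero (hW : W ∈ S.T) (h : ∀ Y ∈ S.T, ctx.g W Y = 0) :
    W = 0 := by
  refine ctx.g_nondeg W fun Y => ?_
  have hY : Y ∈ S.T ⊔ S.Nor := S.compl.sup_eq_top ▸ Submodule.mem_top
  obtain ⟨t, ht, n, hn, rfl⟩ := Submodule.mem_sup.mp hY
  rw [map_add, h t ht, S.orth W hW n hn, add_zero]

theorem g_nab_eq (hX : X ∈ S.T) (hY : Y ∈ S.T) (hW : W ∈ S.T) :
    ctx.g (S.nab X Y) W = ctx.g (M.C.op X Y) W := by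
  rw [S.gauss X hX Y hY, map_add, LinearMap.add_apply, S.orth' (S.B_mem X hX Y hY) hW,
    add_zero]

theorem g_nabS_eq (hX : X ∈ S.T) (hY : Y ∈ S.T) (hW : W ∈ S.T) :
    ctx.g (S.nabS X Y) W = ctx.g (M.Cs.op X Y) W := by
  rw [S.gaussS X hX Y hY, map_add, LinearMap.add_apply, S.orth' (S.Bs_mem X hX Y hY) hW,
    add_zero]

theorem g_C_op_eq_neg_g_Aop (hX : X ∈ S.T) (hU : U ∈ S.Nor) (hW : W ∈ S.T) :
    ctx.g (M.C.op X U) W = -ctx.g (S.Aop U X) W := by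
  rw [S.wein X hX U hU, map_add, LinearMap.add_apply, S.orth' (S.perp_mem X hX U hU) hW,
    add_zero, map_neg, LinearMap.neg_apply]

theorem g_Cs_op_eq_neg_g_AopS (hX : X ∈ S.T) (hU : U ∈ S.Nor) (hW : W ∈ S.T) :
    ctx.g (M.Cs.op X U) W = -ctx.g (S.AopS U X) W := by
  rw [S.weinS X hX U hU, map_add, LinearMap.add_apply, S.orth' (S.perpS_mem X hX U hU) hW,
    add_zero, map_neg, LinearMap.neg_apply]

theorem g_AopS_eq (hX : X ∈ S.T) (hY : Y ∈ S.T) (hU : U ∈ S.Nor) :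
    ctx.g (S.AopS U X) Y = ctx.g (S.B X Y) U := by
  have h := M.g_C_op_eq_neg (X := X) (S.orth Y hY U hU)
  rw [S.g_Cs_op_eq_neg_g_AopS hX hU hY, neg_neg, S.gauss X hX Y hY, map_add,
    LinearMap.add_apply, S.orth _ (S.nab_mem X hX Y hY) U hU, zero_add] at h
  exact h.symm

theorem g_Aop_eq (hX : X ∈ S.T) (hY : Y ∈ S.T) (hU : U ∈ S.Nor) :
    ctx.g (S.Aop U X) Y = ctx.g (S.Bs X Y) U := by
  have h := M.g_Cs_op_eq_neg (X := X) (S.orth Y hY U hU)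
  rw [S.g_C_op_eq_neg_g_Aop hX hU hY, neg_neg, S.gaussS X hX Y hY, map_add,
    LinearMap.add_apply, S.orth _ (S.nabS_mem X hX Y hY) U hU, zero_add] at h
  exact h.symm

theorem g_AopS_symm (hU : U ∈ S.Nor) (hX : X ∈ S.T) (hY : Y ∈ S.T) :
    ctx.g (S.AopS U X) Y = ctx.g (S.AopS U Y) X := by
  rw [S.g_AopS_eq hX hY hU, S.B_symm X hX Y hY, S.g_AopS_eq hY hX hU]

theorem g_Aop_symm (hU : U ∈ S.Nor) (hX : X ∈ S.T) (hY : Y ∈ S.T) :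
    ctx.g (S.Aop U X) Y = ctx.g (S.Aop U Y) X := by
  rw [S.g_Aop_eq hX hY hU, S.Bs_symm X hX Y hY, S.g_Aop_eq hY hX hU]

end StatSub

namespace CRSub

variable {M : HolStatMan ctx} {S : StatSub ctx M} (cr : CRSub ctx M S) {X Y Z W : V}

theorem F_eq_J (hZ : Z ∈ cr.Dp) : S.F Z = M.J Z := by
  have hZT := cr.Dp_le hZ
  have hP : S.P Z ∈ S.Nor := by
    rw [eq_sub_of_add_eq (S.PF_dec Z hZT).symm]
    exact sub_mem (cr.J_Dp Z hZ) (S.F_mem Z hZT)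
  rw [S.PF_dec Z hZT, Submodule.disjoint_def.mp S.compl.disjoint _ (S.P_mem Z hZT) hP,
    zero_add]

theorem eq_zero_of_mem_Dp (hW : W ∈ cr.Dp) (h : ∀ Z ∈ cr.Dp, ctx.g W Z = 0) : W = 0 := by
  refine S.eq_zero_of_forall_g_eq_zero (cr.Dp_le hW) fun Y hY => ?_
  obtain ⟨a, ha, b, hb, rfl⟩ := Submodule.mem_sup.mp (cr.spanD ▸ hY)
  rw [map_add, ctx.g_symm, cr.orthD a ha W hW, h b hb, add_zero]

theorem eq_zero_of_mem_Dd (hW : W ∈ cr.Dd) (h : ∀ Y ∈ cr.Dd, ctx.g W Y = 0) : W = 0 := by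
  refine S.eq_zero_of_forall_g_eq_zero (cr.Dd_le hW) fun Y hY => ?_
  obtain ⟨a, ha, b, hb, rfl⟩ := Submodule.mem_sup.mp (cr.spanD ▸ hY)
  rw [map_add, h a ha, cr.orthD W hW b hb, add_zero]

theorem mem_Dd_of_forall_g_eq_zero (hW : W ∈ S.T) (h : ∀ Z ∈ cr.Dp, ctx.g W Z = 0) :
    W ∈ cr.Dd := by
  obtain ⟨a, ha, b, hb, rfl⟩ := Submodule.mem_sup.mp (cr.spanD ▸ hW)
  have hb0 : b = 0 := cr.eq_zero_of_mem_Dp hb fun Z hZ => by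
    simpa only [map_add, LinearMap.add_apply, cr.orthD a ha Z hZ, zero_add] using h Z hZ
  rwa [hb0, add_zero]

theorem mem_Dp_of_forall_g_eq_zero (hW : W ∈ S.T) (h : ∀ Y ∈ cr.Dd, ctx.g W Y = 0) :
    W ∈ cr.Dp := by
  obtain ⟨a, ha, b, hb, rfl⟩ := Submodule.mem_sup.mp (cr.spanD ▸ hW)
  have ha0 : a = 0 := cr.eq_zero_of_mem_Dd ha fun Y hY => by
    simpa only [map_add, LinearMap.add_apply, ctx.g_symm b, cr.orthD Y hY b hb, add_zero]
      using h Y hY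
  rwa [ha0, zero_add]

theorem g_C_op_eq_zero_of_AopS_eq_zero
    (hAs : ∀ Z ∈ cr.Dp, ∀ X ∈ cr.Dd, S.AopS (S.F Z) X = 0)
    (hX : X ∈ S.T) (hZ : Z ∈ cr.Dp) (hY : Y ∈ cr.Dd) : ctx.g (M.C.op X Z) Y = 0 := by
  have hJY := cr.J_Dd Y hY
  have hFZ := S.F_mem Z (cr.Dp_le hZ)
  calc ctx.g (M.C.op X Z) Y = ctx.g (M.Cs.op X (S.F Z)) (M.J Y) := by
        rw [cr.F_eq_J hZ, M.Cs_op_J, M.Jiso]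
    _ = -ctx.g (S.AopS (S.F Z) (M.J Y)) X := by
        rw [S.g_Cs_op_eq_neg_g_AopS hX hFZ (cr.Dd_le hJY),
          S.g_AopS_symm hFZ hX (cr.Dd_le hJY)]
    _ = 0 := by rw [hAs Z hZ _ hJY, map_zero, LinearMap.zero_apply, neg_zero]

theorem g_Cs_op_eq_zero_of_Aop_eq_zero
    (hA : ∀ Z ∈ cr.Dp, ∀ X ∈ cr.Dd, S.Aop (S.F Z) X = 0)
    (hX : X ∈ S.T) (hZ : Z ∈ cr.Dp) (hY : Y ∈ cr.Dd) : ctx.g (M.Cs.op X Z) Y = 0 := by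
  have hJY := cr.J_Dd Y hY
  have hFZ := S.F_mem Z (cr.Dp_le hZ)
  calc ctx.g (M.Cs.op X Z) Y = ctx.g (M.C.op X (S.F Z)) (M.J Y) := by
        rw [cr.F_eq_J hZ, M.C_op_J, M.Jiso]
    _ = -ctx.g (S.Aop (S.F Z) (M.J Y)) X := by
        rw [S.g_C_op_eq_neg_g_Aop hX hFZ (cr.Dd_le hJY),
          S.g_Aop_symm hFZ hX (cr.Dd_le hJY)]
    _ = 0 := by rw [hA Z hZ _ hJY, map_zero, LinearMap.zero_apply, neg_zero]

end CRSub

end CRProduct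

/-- A CR-statistical submanifold is a CR-product if
`A_{F𝒟⊥} 𝒟 = 0` and `A*_{F𝒟⊥} 𝒟 = 0`. -/
theorem CR_product_criterion
    (ctx : StatContext A V) (M : HolStatMan ctx) (S : StatSub ctx M) (cr : CRSub ctx M S)
    (hA : ∀ Z ∈ cr.Dp, ∀ X ∈ cr.Dd, S.Aop (S.F Z) X = 0)
    (hAs : ∀ Z ∈ cr.Dp, ∀ X ∈ cr.Dd, S.AopS (S.F Z) X = 0) :
    IsCRProduct ctx M S cr := by
  refine ⟨fun X hX Y hY => ⟨?_, ?_⟩, fun X hX Z hZ => ⟨?_, ?_⟩⟩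
  · refine cr.mem_Dd_of_forall_g_eq_zero (S.nab_mem X hX Y (cr.Dd_le hY)) fun Z hZ => ?_
    rw [S.g_nab_eq hX (cr.Dd_le hY) (cr.Dp_le hZ), M.g_C_op_eq_neg (cr.orthD Y hY Z hZ),
      cr.g_Cs_op_eq_zero_of_Aop_eq_zero hA hX hZ hY, neg_zero]
  · refine cr.mem_Dd_of_forall_g_eq_zero (S.nabS_mem X hX Y (cr.Dd_le hY)) fun Z hZ => ?_
    rw [S.g_nabS_eq hX (cr.Dd_le hY) (cr.Dp_le hZ), M.g_Cs_op_eq_neg (cr.orthD Y hY Z hZ),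
      cr.g_C_op_eq_zero_of_AopS_eq_zero hAs hX hZ hY, neg_zero]
  · refine cr.mem_Dp_of_forall_g_eq_zero (S.nab_mem X hX Z (cr.Dp_le hZ)) fun Y hY => ?_
    rw [S.g_nab_eq hX (cr.Dp_le hZ) (cr.Dd_le hY)]
    exact cr.g_C_op_eq_zero_of_AopS_eq_zero hAs hX hZ hY
  · refine cr.mem_Dp_of_forall_g_eq_zero (S.nabS_mem X hX Z (cr.Dp_le hZ)) fun Y hY => ?_
    rw [S.g_nabS_eq hX (cr.Dp_le hZ) (cr.Dd_le hY)]
    exact cr.g_Cs_op_eq_zero_of_Aop_eq_zero hA hX hZ hY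
end
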